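/- Dual shuffle factorization: f̄_{1→n} f̄_{2→n} ··· f̄_{m→n} = x^{(n-m)}_n · A_{1→m} for n ≥ m ≥ 1, in the group algebra of the braid group, where x^{(n-m)}_n are the quantum shuffle elements. -/
import Mathlib


/-- The descending product `σ_{b-1} σ_{b-2} ⋯ σ_a` (equal to `1` when `b ≤ a`). -/
def braidFallProd {A : Type*} [Ring A] (σ : ℕ → A) (a b : ℕ) : A :=
  ((List.range (b - a)).map (fun i => σ (b - 1 - i))).prod

/-- The elements `f_{k→m}`, defined by `f_{k→k} = 1`, `f_{k→m} = 1 - f_{k→m-1} σ_{m-1}`. -/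
def braidF {A : Type*} [Ring A] (σ : ℕ → A) (k : ℕ) : ℕ → A
  | 0 => 1
  | m + 1 => if m + 1 ≤ k then 1 else 1 - braidF σ k m * σ m

/-- The elements `f̄_{k→m}`, defined by `f̄_{k→k} = 1`, `f̄_{k→m} = 1 - f̄_{k+1→m} σ_k`. -/
def braidFbar {A : Type*} [Ring A] (σ : ℕ → A) (m : ℕ) (k : ℕ) : A :=
  if h : m ≤ k then 1 else 1 - braidFbar σ m (k + 1) * σ k
termination_by m - k
decreasing_by omega

/-- The quantum antisymmetrizers `A_{k→n}`: `A_{k→k} = 1`, `A_{k→n} = f_{k→n} A_{k→n-1}`. -/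
def braidAntis {A : Type*} [Ring A] (σ : ℕ → A) (k : ℕ) : ℕ → A
  | 0 => 1
  | n + 1 => if n + 1 ≤ k then 1 else braidF σ k (n + 1) * braidAntis σ k n

/-- The quantum shuffle elements `x^{(p)}_n`: `x^{(0)}_n = 1`, `x^{(n)}_n = 1` and
`x^{(n-m+1)}_{n+1} = x^{(n-m)}_n - (-1)^{n-m} x^{(n-m+1)}_n σ_n σ_{n-1} ⋯ σ_m`. -/
def braidShuffle {A : Type*} [Ring A] (σ : ℕ → A) : ℕ → ℕ → A
  | 0, _ => 1
  | _ + 1, 0 => 1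
  | p + 1, n + 1 =>
      if n ≤ p then 1
      else braidShuffle σ p n -
        (-1 : A) ^ p * braidShuffle σ (p + 1) n * braidFallProd σ (n - p) (n + 1)
termination_by p n => (n, p)

section Aux

variable {A : Type*} [Ring A] (σ : ℕ → A)

lemma fall_empty (a b : ℕ) (h : b ≤ a) : braidFallProd σ a b = 1 := by
  simp [braidFallProd, Nat.sub_eq_zero_of_le h]

lemma fall_single (a : ℕ) : braidFallProd σ a (a + 1) = σ a := by
  simp [braidFallProd, List.range_succ]

lemma fall_succ_left (a b : ℕ) (h : a ≤ b) :
    braidFallProd σ a (b + 1) = σ b * braidFallProd σ a b := by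
  unfold braidFallProd
  rw [show b + 1 - a = (b - a) + 1 by omega, List.range_succ_eq_map,
    List.map_cons, List.prod_cons, List.map_map]
  congr 2
  refine List.map_congr_left (fun i _ => ?_)
  simp only [Function.comp_apply]
  congr 1
  omega

lemma fall_succ_right (a b : ℕ) (h : a < b) :
    braidFallProd σ a b = braidFallProd σ (a + 1) b * σ a := by
  unfold braidFallProd
  rw [show b - a = (b - (a+1)) + 1 by omega, List.range_succ]
  simp only [List.map_append, List.prod_append, List.map_cons, List.map_nil,
    List.prod_cons, List.prod_nil, mul_one]
  congr 2
  omega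

lemma commute_fall (z : A) (a b : ℕ) (h : ∀ i, a ≤ i → i < b → Commute z (σ i)) :
    Commute z (braidFallProd σ a b) := by
  apply Commute.list_prod_right
  intro x hx
  simp only [List.mem_map, List.mem_range] at hx
  obtain ⟨i, hi, rfl⟩ := hx
  exact h _ (by omega) (by omega)

lemma commute_braidF (z : A) (k : ℕ) : ∀ m, (∀ i, i < m → Commute z (σ i)) →
    Commute z (braidF σ k m) := by
  intro m
  induction m with
  | zero => intro _; simpa [braidF] using Commute.one_right z
  | succ m ih =>
    intro h
    rw [braidF]
    split
    · exact Commute.one_right z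
    · exact (Commute.one_right z).sub_right ((ih (fun i hi => h i (by omega))).mul_right
        (h m (by omega)))

lemma fbar_one (n k : ℕ) (h : n ≤ k) : braidFbar σ n k = 1 := by
  rw [braidFbar, dif_pos h]

lemma fbar_rec (n k : ℕ) (h : k < n) :
    braidFbar σ n k = 1 - braidFbar σ n (k + 1) * σ k := by
  rw [braidFbar, dif_neg (by omega)]

lemma commute_braidFbar (z : A) (n : ℕ) : ∀ d k, d = n - k →
    (∀ i, k ≤ i → i < n → Commute z (σ i)) → Commute z (braidFbar σ n k) := by
  intro d
  induction d with
  | zero =>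
    intro k hk _
    rw [fbar_one σ n k (by omega)]
    exact Commute.one_right z
  | succ d ih =>
    intro k hk h
    rw [fbar_rec σ n k (by omega)]
    exact (Commute.one_right z).sub_right
      ((ih (k+1) (by omega) (fun i hi hi' => h i (by omega) hi')).mul_right
        (h k (by omega) (by omega)))

lemma commute_braidAntis (z : A) (k : ℕ) : ∀ m, (∀ i, i < m → Commute z (σ i)) →
    Commute z (braidAntis σ k m) := by
  intro m
  induction m with
  | zero => intro _; simpa [braidAntis] using Commute.one_right z
  | succ m ih =>
    intro h
    rw [braidAntis]
    split
    · exact Commute.one_right z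
    · exact (commute_braidF σ z k (m+1) h).mul_right (ih (fun i hi => h i (by omega)))

lemma braidF_rec (k m : ℕ) (h : ¬ (m + 1 ≤ k)) :
    braidF σ k (m + 1) = 1 - braidF σ k m * σ m := by
  rw [braidF, if_neg h]

lemma shuffle_zero (n : ℕ) : braidShuffle σ 0 n = 1 := by
  simp [braidShuffle]

lemma shuffle_of_le (p n : ℕ) (h : n ≤ p) : braidShuffle σ p n = 1 := by
  match p, n with
  | 0, _ => simp [braidShuffle]
  | p + 1, 0 => simp [braidShuffle]
  | p + 1, n + 1 => rw [braidShuffle, if_pos (by omega)]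

lemma shuffle_rec (p n m : ℕ) (h : p < n) (hm : m = n - p) :
    braidShuffle σ (p+1) (n+1) = braidShuffle σ p n -
      (-1 : A) ^ p * braidShuffle σ (p + 1) n * braidFallProd σ m (n + 1) := by
  subst hm
  rw [braidShuffle, if_neg (by omega)]

lemma shuffle_one (n : ℕ) : braidShuffle σ 1 n = braidF σ 1 n := by
  induction n with
  | zero => simp [braidShuffle, braidF]
  | succ n ih =>
    rcases Nat.eq_zero_or_pos n with h | h
    · subst h
      rw [shuffle_of_le σ 1 1 le_rfl, braidF, if_pos le_rfl]
    · rw [shuffle_rec σ 0 n n (by omega) (by omega), braidF_rec σ 1 n (by omega),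
        shuffle_zero, fall_single, pow_zero, ih]
      noncomm_ring

end Aux

section WithRel

variable {A : Type*} [Ring A] (σ : ℕ → A)
  (hbraid : ∀ i, σ i * σ (i + 1) * σ i = σ (i + 1) * σ i * σ (i + 1))
  (hcomm : ∀ i j, i + 2 ≤ j → σ i * σ j = σ j * σ i)

include hbraid hcomm

lemma fall_shift : ∀ n j m, m ≤ j → j < n →
    braidFallProd σ m (n + 1) * σ (j + 1) = σ j * braidFallProd σ m (n + 1) := by
  intro n
  induction n with
  | zero => intro j m _ h; omega
  | succ n ih =>
    intro j m hmj hjn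
    rw [fall_succ_left σ m (n+1) (by omega)]
    rcases Nat.lt_or_ge j n with h | h
    · rw [mul_assoc, ih j m hmj h, ← mul_assoc, ← hcomm j (n+1) (by omega), mul_assoc]
    · -- j = n
      have hj : j = n := by omega
      subst hj
      rw [fall_succ_left σ m j (by omega)]
      have hcU : Commute (σ (j+1)) (braidFallProd σ m j) := by
        apply commute_fall
        intro i hi hi'
        exact (hcomm i (j+1) (by omega)).symm
      calc σ (j+1) * (σ j * braidFallProd σ m j) * σ (j+1)
          = σ (j+1) * σ j * (braidFallProd σ m j * σ (j+1)) := by noncomm_ring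
        _ = σ (j+1) * σ j * (σ (j+1) * braidFallProd σ m j) := by rw [← hcU.eq]
        _ = σ (j+1) * σ j * σ (j+1) * braidFallProd σ m j := by noncomm_ring
        _ = σ j * σ (j+1) * σ j * braidFallProd σ m j := by rw [← hbraid j]
        _ = σ j * (σ (j+1) * (σ j * braidFallProd σ m j)) := by noncomm_ring

lemma fall_mul_fbar : ∀ d k m n, d = n - k → m ≤ k → k ≤ n →
    braidFallProd σ m (n + 1) * braidFbar σ (n + 1) (k + 1) =
      braidFbar σ n k * braidFallProd σ m (n + 1) := by
  intro d
  induction d with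
  | zero =>
    intro k m n hd hmk hkn
    have hk : k = n := by omega
    subst hk
    rw [fbar_one σ (k+1) (k+1) le_rfl, fbar_one σ k k le_rfl, one_mul, mul_one]
  | succ d ih =>
    intro k m n hd hmk hkn
    have hkn' : k < n := by omega
    rw [fbar_rec σ (n+1) (k+1) (by omega), fbar_rec σ n k (by omega)]
    have h1 := ih (k+1) m n (by omega) (by omega) (by omega)
    have h2 := fall_shift σ hbraid hcomm n k m hmk hkn'
    calc braidFallProd σ m (n + 1) * (1 - braidFbar σ (n+1) (k + 1 + 1) * σ (k+1))
        = braidFallProd σ m (n + 1) -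
          (braidFallProd σ m (n + 1) * braidFbar σ (n+1) (k + 1 + 1)) * σ (k+1) := by
          noncomm_ring
      _ = braidFallProd σ m (n + 1) -
          braidFbar σ n (k+1) * (braidFallProd σ m (n + 1) * σ (k+1)) := by
          rw [h1]; noncomm_ring
      _ = braidFallProd σ m (n + 1) -
          braidFbar σ n (k+1) * (σ k * braidFallProd σ m (n + 1)) := by rw [h2]
      _ = (1 - braidFbar σ n (k + 1) * σ k) * braidFallProd σ m (n + 1) := by
          noncomm_ring

end WithRel

section Aux2

variable {A : Type*} [Ring A] (σ : ℕ → A)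

lemma fbar_expand : ∀ d n k e, d = n - k → k ≤ n → e + k = n + 1 →
    braidFbar σ (n + 1) k =
      braidFbar σ n k + (-1 : A) ^ e * braidFallProd σ k (n + 1) := by
  intro d
  induction d with
  | zero =>
    intro n k e hd hkn he
    have hk : k = n := by omega
    subst hk
    have he1 : e = 1 := by omega
    subst he1
    rw [fbar_rec σ (k+1) k (by omega), fbar_one σ (k+1) (k+1) le_rfl,
      fbar_one σ k k le_rfl, fall_single, one_mul, pow_one]
    noncomm_ring
  | succ d ih =>
    intro n k e hd hkn he
    have hkn' : k < n := by omega
    have he2 : e = (d + 1) + 1 := by omega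
    subst he2
    rw [fbar_rec σ (n+1) k (by omega),
      ih n (k+1) (d+1) (by omega) (by omega) (by omega),
      fall_succ_right σ k (n+1) (by omega), pow_succ (-1 : A) (d+1)]
    have hbk := fbar_rec σ n k hkn'
    set c : A := (-1 : A) ^ (d+1)
    calc 1 - (braidFbar σ n (k+1) + c * braidFallProd σ (k+1) (n+1)) * σ k
        = (1 - braidFbar σ n (k+1) * σ k) -
            c * (braidFallProd σ (k+1) (n+1) * σ k) := by noncomm_ring
      _ = braidFbar σ n k + c * -1 * (braidFallProd σ (k+1) (n+1) * σ k) := by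
          rw [← hbk]; noncomm_ring

lemma ring_key (u X X' X0 Fb Fbm Fm F1 W V sm : A)
    (hu : u = 1 ∨ u = -1)
    (E1 : X * Fb = X0 * F1) (E2 : X' * Fbm = X * Fm)
    (E3 : W * (Fb + -u * V) = Fbm * W)
    (E4 : W = V * sm) (E5 : F1 = 1 - Fm * sm) (E6 : Fm * V = V * Fm) :
    (X - -u * X' * W) * (Fb + -u * V) = (X0 - u * X * V) * F1 := by
  have h : X' * (W * (Fb + -u * V)) = X * (V * (Fm * sm)) := by
    rw [E3, ← mul_assoc, E2, E4, mul_assoc, ← mul_assoc Fm V sm, E6, mul_assoc]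
  have hX : X * (Fb + -u * V) = X * Fb + -u * (X * V) := by
    rcases hu with h1 | h1 <;> subst h1 <;> noncomm_ring
  calc (X - -u * X' * W) * (Fb + -u * V)
      = X * (Fb + -u * V) - -u * (X' * (W * (Fb + -u * V))) := by noncomm_ring
    _ = X * Fb + -u * (X * V) - -u * (X * (V * (Fm * sm))) := by rw [h, hX]
    _ = X * Fb + -u * (X * (V * (1 - Fm * sm))) := by noncomm_ring
    _ = X * Fb + -u * (X * (V * F1)) := by rw [← E5]
    _ = X0 * F1 + -u * (X * (V * F1)) := by rw [E1]
    _ = (X0 - u * X * V) * F1 := by noncomm_ring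

end Aux2

section Main

variable {A : Type*} [Ring A] (σ : ℕ → A)
  (hbraid : ∀ i, σ i * σ (i + 1) * σ i = σ (i + 1) * σ i * σ (i + 1))
  (hcomm : ∀ i j, i + 2 ≤ j → σ i * σ j = σ j * σ i)

include hbraid hcomm

lemma dualL : ∀ n m, m < n →
    braidShuffle σ (n - m) n * braidFbar σ n (m + 1) =
      braidShuffle σ (n - m - 1) n * braidF σ 1 (m + 1) := by
  intro n
  induction n with
  | zero => intro m h; omega
  | succ n IH =>
    intro m hm
    rcases Nat.lt_or_ge m n with hmn | hmn
    · -- m < n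
      rcases Nat.eq_zero_or_pos m with hm0 | hm1
      · -- m = 0
        subst hm0
        rw [shuffle_of_le σ (n+1-0) (n+1) (by omega), one_mul,
          show braidF σ 1 (0+1) = 1 by simp [braidF], mul_one,
          show n + 1 - 0 - 1 = n by omega]
        obtain ⟨q, hq⟩ : ∃ q, n = q + 1 := ⟨n - 1, by omega⟩
        subst hq
        have hIH := IH 0 (by omega)
        rw [shuffle_of_le σ (q+1-0) (q+1) (by omega), one_mul,
          show braidF σ 1 (0+1) = 1 by simp [braidF], mul_one,
          show q + 1 - 0 - 1 = q by omega] at hIH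
        rw [fbar_expand σ q (q+1) (0+1) (q+1) (by omega) (by omega) (by omega),
          shuffle_rec σ q (q+1) (0+1) (by omega) (by omega),
          shuffle_of_le σ (q+1) (q+1) le_rfl, hIH, pow_succ]
        generalize ((-1 : A) ^ q) = c
        noncomm_ring
      · -- 1 ≤ m < n
        obtain ⟨q, hq⟩ : ∃ q, n - m = q + 1 := ⟨n - m - 1, by omega⟩
        have e1 : n + 1 - m = (q + 1) + 1 := by omega
        have e2 : n + 1 - m - 1 = q + 1 := by omega
        rw [e2, e1,
          shuffle_rec σ (q+1) n m (by omega) (by omega),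
          shuffle_rec σ q n (m+1) (by omega) (by omega),
          fbar_expand σ (n - (m+1)) n (m+1) (q+1) (by omega) (by omega) (by omega)]
        have hs : ((-1 : A)) ^ (q + 1) = -(-1 : A) ^ q := by
          rw [pow_succ, mul_neg_one]
        rw [hs]
        have E1 := IH m hmn
        rw [show n - m - 1 = q by omega, hq] at E1
        have E2 := IH (m - 1) (by omega)
        rw [show n - (m-1) - 1 = q + 1 by omega, show n - (m-1) = q + 1 + 1 by omega,
          show m - 1 + 1 = m by omega] at E2
        have E3 : braidFallProd σ m (n+1) *
            (braidFbar σ n (m+1) + -(-1:A)^q * braidFallProd σ (m+1) (n+1)) =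
            braidFbar σ n m * braidFallProd σ m (n+1) := by
          have t := fall_mul_fbar σ hbraid hcomm (n - m) m m n rfl le_rfl (by omega)
          rw [fbar_expand σ (n - (m+1)) n (m+1) (q+1) (by omega) (by omega) (by omega),
            hs] at t
          exact t
        have E4 : braidFallProd σ m (n+1) =
            braidFallProd σ (m+1) (n+1) * σ m := fall_succ_right σ m (n+1) (by omega)
        have E5 : braidF σ 1 (m+1) = 1 - braidF σ 1 m * σ m :=
          braidF_rec σ 1 m (by omega)
        have E6 : braidF σ 1 m * braidFallProd σ (m+1) (n+1) =
            braidFallProd σ (m+1) (n+1) * braidF σ 1 m := by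
          have : Commute (braidF σ 1 m) (braidFallProd σ (m+1) (n+1)) := by
            apply commute_fall
            intro i hi hi'
            exact ((commute_braidF σ (σ i) 1 m
              (fun j hj => (hcomm j i (by omega)).symm)).symm)
          exact this.eq
        exact ring_key ((-1:A)^q) _ _ _ _ _ _ _ _ _ _
          (neg_one_pow_eq_or A q) E1 E2 E3 E4 E5 E6
    · -- m = n
      have hmn' : m = n := by omega
      subst hmn'
      rw [show m + 1 - m - 1 = 0 by omega, show m + 1 - m = 1 by omega,
        fbar_one σ (m+1) (m+1) le_rfl, shuffle_zero, shuffle_one, mul_one, one_mul]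

lemma main_aux : ∀ m n, m ≤ n →
    ((List.range m).map (fun i => braidFbar σ n (i + 1))).prod =
      braidShuffle σ (n - m) n * braidAntis σ 1 m := by
  intro m
  induction m with
  | zero =>
    intro n _
    simp only [List.range_zero, List.map_nil, List.prod_nil]
    rw [shuffle_of_le σ (n - 0) n (by omega)]
    simp [braidAntis]
  | succ m ih =>
    intro n hmn
    rw [List.range_succ, List.map_append, List.prod_append]
    simp only [List.map_cons, List.map_nil, List.prod_cons, List.prod_nil, mul_one]
    rw [ih n (by omega)]
    have hcom : braidAntis σ 1 m * braidFbar σ n (m + 1) =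
        braidFbar σ n (m + 1) * braidAntis σ 1 m := by
      have : Commute (braidAntis σ 1 m) (braidFbar σ n (m+1)) := by
        apply commute_braidFbar
        · rfl
        · intro i hi hi'
          exact ((commute_braidAntis σ (σ i) 1 m
            (fun j hj => (hcomm j i (by omega)).symm)).symm)
      exact this.eq
    have hantis : braidAntis σ 1 (m + 1) = braidF σ 1 (m+1) * braidAntis σ 1 m := by
      rcases Nat.eq_zero_or_pos m with h0 | h1
      · subst h0
        simp [braidAntis, braidF]
      · rw [braidAntis, if_neg (by omega)]
    rw [mul_assoc, hcom, ← mul_assoc, dualL σ hbraid hcomm n m (by omega),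
      mul_assoc, ← hantis, show n - m - 1 = n - (m+1) by omega]

end Main

/-- Dual shuffle factorization in the group algebra of the braid group:
`f̄_{1→n} f̄_{2→n} ⋯ f̄_{m→n} = x^{(n-m)}_n A_{1→m}` for `n ≥ m ≥ 1`. -/
theorem braid_dual_shuffle_factorization {A : Type*} [Ring A] (σ : ℕ → A)
    (hbraid : ∀ i, σ i * σ (i + 1) * σ i = σ (i + 1) * σ i * σ (i + 1))
    (hcomm : ∀ i j, i + 2 ≤ j → σ i * σ j = σ j * σ i)
    (m n : ℕ) (hm : 1 ≤ m) (hmn : m ≤ n) :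
    ((List.range m).map (fun i => braidFbar σ n (i + 1))).prod =
      braidShuffle σ (n - m) n * braidAntis σ 1 m :=
  main_aux σ hbraid hcomm m n hmn
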